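/- For every s∈[0,2/3] and c = √(1-(3/2)s), there exists a two-qubit density matrix ρ (namely ρ_MVB with β=1+c²) with S_L(ρ)=s, C(ρ)=c, and m(ρ)=1+c²=2-(3/2)s; moreover no state of class E₀ with linear entropy s has a larger value of m. -/

import Mathlib

open Matrix Kronecker Complex ComplexOrder

noncomputable section
open scoped Classical

/-- Pauli matrices. -/
def pauli : Fin 3 → Matrix (Fin 2) (Fin 2) ℂ
  | 0 => !![0, 1; 1, 0]
  | 1 => !![0, -Complex.I; Complex.I, 0]
  | 2 => !![1, 0; 0, -1]

/-- Kronecker product of two one-qubit operators, reindexed to a 4×4 matrix. -/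
def kron4 (A B : Matrix (Fin 2) (Fin 2) ℂ) : Matrix (Fin 4) (Fin 4) ℂ :=
  Matrix.reindex finProdFinEquiv finProdFinEquiv (A ⊗ₖ B)

/-- A density matrix: positive semidefinite with unit trace. -/
def IsDensity {n : ℕ} (ρ : Matrix (Fin n) (Fin n) ℂ) : Prop :=
  ρ.PosSemidef ∧ ρ.trace = 1

/-- The spin-flipped matrix ρ̃ = (σ₂⊗σ₂) ρ̄ (σ₂⊗σ₂). -/
def tildeMat (ρ : Matrix (Fin 4) (Fin 4) ℂ) : Matrix (Fin 4) (Fin 4) ℂ :=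
  kron4 (pauli 1) (pauli 1) * ρ.map (starRingEnd ℂ) * kron4 (pauli 1) (pauli 1)

/-- Positive square root of a positive semidefinite matrix (0 otherwise). -/
def msqrt {n : ℕ} (A : Matrix (Fin n) (Fin n) ℂ) : Matrix (Fin n) (Fin n) ℂ :=
  if h : A.PosSemidef then
    (h.1.eigenvectorUnitary : Matrix (Fin n) (Fin n) ℂ) *
      diagonal (((↑) : ℝ → ℂ) ∘ (Real.sqrt ·) ∘ h.1.eigenvalues) *
      (star h.1.eigenvectorUnitary : Matrix (Fin n) (Fin n) ℂ)
  else 0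

/-- ρ̂ = √(√ρ ρ̃ √ρ). -/
def hatMat (ρ : Matrix (Fin 4) (Fin 4) ℂ) : Matrix (Fin 4) (Fin 4) ℂ :=
  msqrt (msqrt ρ * tildeMat ρ * msqrt ρ)

/-- Eigenvalues of a Hermitian matrix (0 otherwise). -/
def evalsC {n : ℕ} (A : Matrix (Fin n) (Fin n) ℂ) : Fin n → ℝ :=
  if h : A.IsHermitian then h.eigenvalues else 0

/-- The concurrence C(ρ) = max(0, 2 λ_max(ρ̂) − tr ρ̂). -/
def concurrence (ρ : Matrix (Fin 4) (Fin 4) ℂ) : ℝ :=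
  max 0 (2 * (⨆ i, evalsC (hatMat ρ) i) - ∑ i, evalsC (hatMat ρ) i)

/-- Correlation matrix T_ρ with entries tr(ρ σₙ⊗σₘ). -/
def Tmat (ρ : Matrix (Fin 4) (Fin 4) ℂ) : Matrix (Fin 3) (Fin 3) ℝ :=
  fun n m => ((ρ * kron4 (pauli n) (pauli m)).trace).re

/-- U_ρ = T_ρᵀ T_ρ. -/
def Umat (ρ : Matrix (Fin 4) (Fin 4) ℂ) : Matrix (Fin 3) (Fin 3) ℝ :=
  (Tmat ρ)ᵀ * Tmat ρ

/-- Eigenvalues of a real symmetric matrix (0 otherwise). -/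
def evalsR {n : ℕ} (A : Matrix (Fin n) (Fin n) ℝ) : Fin n → ℝ :=
  if h : A.IsHermitian then h.eigenvalues else 0

/-- The Horodecki quantity m(ρ) = max_{j<k} (u_j + u_k). -/
def mval (ρ : Matrix (Fin 4) (Fin 4) ℂ) : ℝ :=
  (Finset.univ.filter (fun p : Fin 3 × Fin 3 => p.1 < p.2)).sup'
    (by decide) (fun p => evalsR (Umat ρ) p.1 + evalsR (Umat ρ) p.2)

/-- Normalized linear entropy S_L(ρ) = (4/3)(1 − tr ρ²). -/
def linEntropy (ρ : Matrix (Fin 4) (Fin 4) ℂ) : ℝ :=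
  (4/3) * (1 - ((ρ * ρ).trace).re)

/-- The class E₀ state with parameters a, b, c, θ. -/
def rhoE0 (a b c θ : ℝ) : Matrix (Fin 4) (Fin 4) ℂ :=
  !![0, 0, 0, 0;
     0, (a : ℂ), (c/2 : ℂ) * Complex.exp (θ * Complex.I), 0;
     0, (c/2 : ℂ) * Complex.exp (-θ * Complex.I), (b : ℂ), 0;
     0, 0, 0, ((1 - a - b : ℝ) : ℂ)]

/-- The maximal-CHSH-violation states ρ_MVB. -/
def rhoMVB (β θ : ℝ) : Matrix (Fin 4) (Fin 4) ℂ :=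
  rhoE0 (1/2) (1/2) (Real.sqrt (β - 1)) θ


/-! ### Auxiliary lemmas -/

open scoped MatrixOrder in
lemma msqrt_eq_of_sq {n : ℕ} {A B : Matrix (Fin n) (Fin n) ℂ} (hA : A.PosSemidef)
    (hB : B.PosSemidef) (h : B * B = A) : msqrt A = B := by
  have e : msqrt A = CFC.sqrt A := by
    unfold msqrt
    rw [dif_pos hA, CFC.sqrt_eq_real_sqrt A hA.nonneg, cfcₙ_eq_cfc, hA.1.cfc_eq, IsHermitian.cfc,
      Unitary.conjStarAlgAut_apply]
    rfl
  rw [e]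
  exact CFC.sqrt_unique h hB.nonneg

section EigAux
variable {𝕜 : Type*} [RCLike 𝕜] {n' : Type*} [Fintype n'] [DecidableEq n']
  {A : Matrix n' n' 𝕜} (hA : A.IsHermitian)

lemma eig_det (μ : ℝ) :
    ((μ : 𝕜) • (1 : Matrix n' n' 𝕜) - A).det = ∏ i, ((μ : 𝕜) - (hA.eigenvalues i : 𝕜)) := by
  set V := (hA.eigenvectorUnitary : Matrix n' n' 𝕜)
  have h1 : star V * V = 1 := Matrix.mem_unitaryGroup_iff'.mp hA.eigenvectorUnitary.2
  have key : star V * ((μ : 𝕜) • 1 - A) * V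
      = (μ : 𝕜) • 1 - diagonal (RCLike.ofReal ∘ hA.eigenvalues) := by
    rw [Matrix.mul_sub, Matrix.sub_mul, show star V * A * V = diagonal (RCLike.ofReal ∘ hA.eigenvalues) by
      have := hA.conjStarAlgAut_star_eigenvectorUnitary
      rw [Unitary.conjStarAlgAut_star_apply] at this
      exact this]
    rw [Matrix.mul_smul, Matrix.smul_mul, mul_one, h1]
  have hdet : ((μ : 𝕜) • 1 - A).det
      = ((μ : 𝕜) • (1 : Matrix n' n' 𝕜) - diagonal (RCLike.ofReal ∘ hA.eigenvalues)).det := by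
    rw [← key, det_mul, det_mul, mul_comm (star V).det, mul_assoc, ← det_mul, h1, det_one, mul_one]
  rw [hdet, smul_eq_diagonal_mul, mul_one, diagonal_sub, det_diagonal]
  rfl

lemma eig_trace : A.trace = ∑ i, (hA.eigenvalues i : 𝕜) := by
  conv_lhs => rw [hA.spectral_theorem]
  rw [Unitary.conjStarAlgAut_apply, Matrix.trace_mul_cycle, Matrix.mem_unitaryGroup_iff'.mp hA.eigenvectorUnitary.2, one_mul,
    trace_diagonal]
  rfl

end EigAux

lemma kron4_eq (A B : Matrix (Fin 2) (Fin 2) ℂ) :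
    kron4 A B = !![A 0 0 * B 0 0, A 0 0 * B 0 1, A 0 1 * B 0 0, A 0 1 * B 0 1;
                   A 0 0 * B 1 0, A 0 0 * B 1 1, A 0 1 * B 1 0, A 0 1 * B 1 1;
                   A 1 0 * B 0 0, A 1 0 * B 0 1, A 1 1 * B 0 0, A 1 1 * B 0 1;
                   A 1 0 * B 1 0, A 1 0 * B 1 1, A 1 1 * B 1 0, A 1 1 * B 1 1] := by
  ext i j
  fin_cases i <;> fin_cases j <;>
    simp [kron4, finProdFinEquiv, kroneckerMap_apply, Fin.divNat, Fin.modNat] <;> rfl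

/-- The middle-block matrix. -/
def mb (α β : ℝ) : Matrix (Fin 4) (Fin 4) ℂ :=
  !![0,0,0,0; 0,(α:ℂ),(β:ℂ),0; 0,(β:ℂ),(α:ℂ),0; 0,0,0,0]

lemma mb_herm (α β : ℝ) : (mb α β).IsHermitian := by
  ext i j
  fin_cases i <;> fin_cases j <;>
    simp [mb, Matrix.conjTranspose_apply, Matrix.vecHead, Matrix.vecTail]

lemma mb_mul (α β γ δ : ℝ) : mb α β * mb γ δ = mb (α*γ+β*δ) (α*δ+β*γ) := by
  ext i j
  fin_cases i <;> fin_cases j <;>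
    simp [mb, Matrix.mul_apply, Fin.sum_univ_four, Matrix.vecHead, Matrix.vecTail] <;>
    push_cast <;> ring

lemma mb_psd {α β : ℝ} (h : |β| ≤ α) : (mb α β).PosSemidef := by
  refine posSemidef_iff_dotProduct_mulVec.mpr ⟨mb_herm α β, fun x => ?_⟩
  have hd : dotProduct (star x) ((mb α β) *ᵥ x)
      = ((α * (((x 1).re^2 + (x 1).im^2) + ((x 2).re^2 + (x 2).im^2))
          + β * (2 * ((x 1).re * (x 2).re + (x 1).im * (x 2).im)) : ℝ) : ℂ) := by
    simp [dotProduct, mulVec, mb, Fin.sum_univ_four, Complex.ext_iff, ← Complex.ofReal_pow,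
      Matrix.vecHead, Matrix.vecTail]
    constructor <;> ring
  rw [hd, Complex.zero_le_real]
  rcases abs_le.mp h with ⟨h1, h2⟩
  nlinarith [mul_nonneg (by linarith : (0:ℝ) ≤ α - β)
      (by positivity : (0:ℝ) ≤ ((x 1).re - (x 2).re)^2 + ((x 1).im - (x 2).im)^2),
    mul_nonneg (by linarith : (0:ℝ) ≤ α + β)
      (by positivity : (0:ℝ) ≤ ((x 1).re + (x 2).re)^2 + ((x 1).im + (x 2).im)^2)]

lemma mb_det (α β μ : ℝ) : ((μ:ℂ) • (1 : Matrix (Fin 4) (Fin 4) ℂ) - mb α β).det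
    = (μ:ℂ)^2 * ((μ:ℂ) - (α+β)) * ((μ:ℂ) - (α-β)) := by
  have : (μ:ℂ) • (1 : Matrix (Fin 4) (Fin 4) ℂ) - mb α β
      = !![(μ:ℂ),0,0,0; 0,(μ:ℂ)-α,-β,0; 0,-β,(μ:ℂ)-α,0; 0,0,0,(μ:ℂ)] := by
    ext i j
    fin_cases i <;> fin_cases j <;>
      simp [mb, Matrix.one_apply, Matrix.vecHead, Matrix.vecTail]
  rw [this]
  simp [Matrix.det_succ_row_zero, Fin.sum_univ_succ, Matrix.vecHead, Matrix.vecTail]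
  ring

lemma mb_trace (α β : ℝ) : (mb α β).trace = ((2*α : ℝ) : ℂ) := by
  simp [Matrix.trace, mb, Fin.sum_univ_four, Matrix.vecHead, Matrix.vecTail]
  push_cast; ring

lemma rhoE0_half (c : ℝ) : rhoE0 (1/2) (1/2) c 0 = mb (1/2) (c/2) := by
  ext i j
  fin_cases i <;> fin_cases j <;>
    simp [rhoE0, mb, Matrix.vecHead, Matrix.vecTail] <;> norm_num

lemma K_eq : kron4 (pauli 1) (pauli 1) = !![0,0,0,-1; 0,0,1,0; 0,1,0,0; -1,0,0,0] := by
  rw [kron4_eq]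
  norm_num [pauli, Complex.I_mul_I]

lemma mb_map_conj (α β : ℝ) : (mb α β).map (starRingEnd ℂ) = mb α β := by
  ext i j
  fin_cases i <;> fin_cases j <;> simp [mb, Matrix.vecHead, Matrix.vecTail]

lemma tilde_mb (α β : ℝ) : tildeMat (mb α β) = mb α β := by
  rw [tildeMat, mb_map_conj, K_eq]
  ext i j
  fin_cases i <;> fin_cases j <;>
    simp [mb, Matrix.mul_apply, Fin.sum_univ_four, Matrix.vecHead, Matrix.vecTail]

lemma hat_mb {c : ℝ} (hc0 : 0 ≤ c) (hc1 : c ≤ 1) :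
    hatMat (mb (1/2) (c/2)) = mb (1/2) (c/2) := by
  have habs : |c/2| ≤ (1/2 : ℝ) := abs_le.mpr ⟨by linarith, by linarith⟩
  have hρ : (mb (1/2) (c/2)).PosSemidef := mb_psd habs
  set p := Real.sqrt ((1+c)/8) with hp
  set q := Real.sqrt ((1-c)/8) with hq
  have hp2 : p^2 = (1+c)/8 := Real.sq_sqrt (by linarith)
  have hq2 : q^2 = (1-c)/8 := Real.sq_sqrt (by linarith)
  have hp0 : 0 ≤ p := Real.sqrt_nonneg _
  have hq0 : 0 ≤ q := Real.sqrt_nonneg _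
  have habs2 : |p - q| ≤ p + q := by
    rw [abs_le]; constructor <;> linarith
  have hσ : (mb (p+q) (p-q)).PosSemidef := mb_psd habs2
  have hσ2 : mb (p+q) (p-q) ^ 2 = mb (1/2) (c/2) := by
    rw [pow_two, mb_mul]
    rw [show (p+q)*(p+q)+(p-q)*(p-q) = 1/2 by nlinarith [hp2, hq2],
      show (p+q)*(p-q)+(p-q)*(p+q) = c/2 by nlinarith [hp2, hq2]]
  have hsq : msqrt (mb (1/2) (c/2)) = mb (p+q) (p-q) := by
    exact msqrt_eq_of_sq hρ hσ (by rw [← pow_two]; exact hσ2)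
  have hρρ : (mb (1/2) (c/2) * mb (1/2) (c/2)).PosSemidef := by
    have := hρ.pow 2
    rwa [pow_two] at this
  have hinner : msqrt (mb (1/2) (c/2)) * tildeMat (mb (1/2) (c/2)) * msqrt (mb (1/2) (c/2))
      = mb (1/2) (c/2) * mb (1/2) (c/2) := by
    rw [hsq, tilde_mb, mb_mul, mb_mul, mb_mul]
    rw [show ((p+q)*(1/2)+(p-q)*(c/2))*(p+q) + ((p+q)*(c/2)+(p-q)*(1/2))*(p-q)
        = (1/2)*(1/2)+(c/2)*(c/2) by nlinarith [hp2, hq2],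
      show ((p+q)*(1/2)+(p-q)*(c/2))*(p-q) + ((p+q)*(c/2)+(p-q)*(1/2))*(p+q)
        = (1/2)*(c/2)+(c/2)*(1/2) by nlinarith [hp2, hq2]]
  rw [hatMat, hinner]
  exact msqrt_eq_of_sq hρρ hρ rfl

lemma evalsC_mb (c : ℝ) :
    (∀ i, evalsC (mb (1/2) (c/2)) i = 0 ∨ evalsC (mb (1/2) (c/2)) i = 1/2 + c/2 ∨
      evalsC (mb (1/2) (c/2)) i = 1/2 - c/2) ∧
    (∃ i, evalsC (mb (1/2) (c/2)) i = 1/2 + c/2) ∧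
    (∑ i, evalsC (mb (1/2) (c/2)) i) = 1 := by
  have h : (mb (1/2) (c/2)).IsHermitian := mb_herm _ _
  have hev : evalsC (mb (1/2) (c/2)) = h.eigenvalues := by
    unfold evalsC; rw [dif_pos h]
  have hcoe : ∀ x : ℝ, (RCLike.ofReal x : ℂ) = Complex.ofReal x := fun _ => rfl
  have P : ∀ μ : ℝ, ∏ i, (μ - h.eigenvalues i)
      = μ^2 * (μ - (1/2 + c/2)) * (μ - (1/2 - c/2)) := by
    intro μ
    have h1 := eig_det h μ
    simp only [hcoe] at h1
    apply Complex.ofReal_injective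
    push_cast
    rw [← h1, mb_det]
    push_cast
    ring
  have hmem : ∀ i, evalsC (mb (1/2) (c/2)) i = 0 ∨ evalsC (mb (1/2) (c/2)) i = 1/2 + c/2 ∨
      evalsC (mb (1/2) (c/2)) i = 1/2 - c/2 := by
    intro i
    rw [hev]
    have h0 := P (h.eigenvalues i)
    have hz : ∏ j, (h.eigenvalues i - h.eigenvalues j) = 0 :=
      Finset.prod_eq_zero (f := fun j => h.eigenvalues i - h.eigenvalues j)
        (Finset.mem_univ i) (sub_self _)
    rw [hz] at h0
    rcases mul_eq_zero.mp h0.symm with h' | h'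
    · rcases mul_eq_zero.mp h' with h'' | h''
      · left; exact pow_eq_zero_iff (by norm_num) |>.mp h''
      · right; left; linarith [sub_eq_zero.mp h'']
    · right; right; linarith [sub_eq_zero.mp h']
  refine ⟨hmem, ?_, ?_⟩
  · have h0 : ∏ i, ((1/2 + c/2) - h.eigenvalues i) = 0 := by rw [P]; ring
    obtain ⟨i, _, hi⟩ := Finset.prod_eq_zero_iff.mp h0
    exact ⟨i, by rw [hev]; linarith [sub_eq_zero.mp hi]⟩
  · have h1 := eig_trace h
    simp only [hcoe] at h1
    rw [mb_trace] at h1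
    have h3 : (2 * (1/2 : ℝ) : ℝ) = ∑ i, h.eigenvalues i := by
      apply Complex.ofReal_injective
      rw [h1]; push_cast; ring
    rw [hev]
    linarith [h3]

lemma conc_mb {c : ℝ} (hc0 : 0 ≤ c) (hc1 : c ≤ 1) : concurrence (mb (1/2) (c/2)) = c := by
  obtain ⟨hmem, ⟨i₀, hi₀⟩, hsum⟩ := evalsC_mb c
  rw [concurrence, hat_mb hc0 hc1]
  have hsup : (⨆ i, evalsC (mb (1/2) (c/2)) i) = 1/2 + c/2 := by
    apply le_antisymm
    · apply ciSup_le
      intro i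
      rcases hmem i with h | h | h <;> rw [h] <;> linarith
    · rw [← hi₀]
      exact le_ciSup (Set.Finite.bddAbove (Set.finite_range _)) i₀
  rw [hsup, hsum]
  rw [max_eq_right (by linarith)]
  ring

lemma Tmat_rhoE0 (a b c θ : ℝ) :
    Tmat (rhoE0 a b c θ) = !![c * Real.cos θ, c * Real.sin θ, 0;
                              -(c * Real.sin θ), c * Real.cos θ, 0;
                              0, 0, 1 - 2*(a+b)] := by
  have he' : Complex.exp (-(↑θ * Complex.I)) = Complex.cos θ - Complex.sin θ * Complex.I := by
    rw [show -(↑θ * Complex.I) = (-↑θ) * Complex.I by ring, Complex.exp_mul_I]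
    push_cast
    rw [Complex.cos_neg, Complex.sin_neg]
    ring
  ext n m
  fin_cases n <;> fin_cases m <;>
    simp [Tmat, rhoE0, kron4_eq, pauli, Matrix.trace, Matrix.mul_apply, Fin.sum_univ_four,
      Matrix.vecHead, Matrix.vecTail, Complex.exp_mul_I, he', ← Complex.ofReal_cos,
      ← Complex.ofReal_sin, Complex.ext_iff] <;> ring

lemma Umat_rhoE0 (a b c θ : ℝ) :
    Umat (rhoE0 a b c θ) = diagonal ![c^2, c^2, (1 - 2*(a+b))^2] := by
  rw [Umat, Tmat_rhoE0]
  ext i j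
  fin_cases i <;> fin_cases j <;>
    simp [Matrix.mul_apply, Fin.sum_univ_three, Matrix.diagonal, Matrix.transpose_apply,
      Matrix.vecHead, Matrix.vecTail] <;>
    first
      | ring1
      | linear_combination (c^2) * Real.sin_sq_add_cos_sq θ

lemma evalsR_diag (u w : ℝ) :
    (∀ i, evalsR (diagonal ![u,u,w] : Matrix (Fin 3) (Fin 3) ℝ) i = u ∨
      evalsR (diagonal ![u,u,w] : Matrix (Fin 3) (Fin 3) ℝ) i = w) ∧
    (∑ i, evalsR (diagonal ![u,u,w] : Matrix (Fin 3) (Fin 3) ℝ) i) = 2*u + w := by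
  have h : (diagonal ![u,u,w] : Matrix (Fin 3) (Fin 3) ℝ).IsHermitian :=
    isHermitian_diagonal _
  have hev : evalsR (diagonal ![u,u,w] : Matrix (Fin 3) (Fin 3) ℝ) = h.eigenvalues := by
    unfold evalsR; rw [dif_pos h]
  have hD : ∀ μ : ℝ, (μ • (1 : Matrix (Fin 3) (Fin 3) ℝ) - diagonal ![u,u,w])
      = diagonal ![μ-u, μ-u, μ-w] := by
    intro μ
    ext i j
    fin_cases i <;> fin_cases j <;>
      simp [Matrix.diagonal, Matrix.one_apply, Matrix.vecHead, Matrix.vecTail]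
  have P : ∀ μ : ℝ, ∏ i, (μ - h.eigenvalues i) = (μ-u)^2 * (μ-w) := by
    intro μ
    have h1 := eig_det h μ
    simp only [RCLike.ofReal_real_eq_id, id] at h1
    rw [hD μ, det_diagonal] at h1
    rw [← h1]
    simp only [Fin.prod_univ_three, Matrix.cons_val_zero, Matrix.cons_val_one,
      Matrix.head_cons, Matrix.cons_val_two, Matrix.tail_cons]
    ring
  constructor
  · intro i
    rw [hev]
    have h0 := P (h.eigenvalues i)
    have hz : ∏ j, (h.eigenvalues i - h.eigenvalues j) = 0 :=
      Finset.prod_eq_zero (f := fun j => h.eigenvalues i - h.eigenvalues j)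
        (Finset.mem_univ i) (sub_self _)
    rw [hz] at h0
    rcases mul_eq_zero.mp h0.symm with h' | h'
    · left; have := pow_eq_zero_iff (n := 2) (by norm_num) |>.mp h'; linarith [sub_eq_zero.mp this]
    · right; linarith [sub_eq_zero.mp h']
  · have h1 := eig_trace h
    simp only [RCLike.ofReal_real_eq_id, id] at h1
    rw [trace_diagonal] at h1
    rw [hev, ← h1]
    simp only [Fin.sum_univ_three, Matrix.cons_val_zero, Matrix.cons_val_one,
      Matrix.head_cons, Matrix.cons_val_two, Matrix.tail_cons]
    ring

lemma mval_le {ρ : Matrix (Fin 4) (Fin 4) ℂ} {u w B : ℝ}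
    (hU : Umat ρ = diagonal ![u,u,w]) (h2u : 2*u ≤ B) (huw : u + w ≤ B) :
    mval ρ ≤ B := by
  obtain ⟨hmem, hsum⟩ := evalsR_diag u w
  rw [Fin.sum_univ_three] at hsum
  have e0 := hmem 0
  have e1 := hmem 1
  have e2 := hmem 2
  rw [mval]
  apply Finset.sup'_le
  intro p hp
  have hlt := (Finset.mem_filter.mp hp).2
  rw [hU]
  fin_cases p <;> dsimp only <;>
    simp only [show ((⟨0, by norm_num⟩ : Fin 3)) = 0 from rfl,
      show ((⟨1, by norm_num⟩ : Fin 3)) = 1 from rfl,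
      show ((⟨2, by norm_num⟩ : Fin 3)) = 2 from rfl] at hlt ⊢ <;>
    first
    | exact absurd hlt (by decide)
    | (rcases e0 with h0 | h0 <;> rcases e1 with h1 | h1 <;> rcases e2 with h2 | h2 <;> linarith)

lemma mval_MVB {c : ℝ} (hc1 : c^2 ≤ 1) : mval (rhoE0 (1/2) (1/2) c 0) = 1 + c^2 := by
  have hU : Umat (rhoE0 (1/2) (1/2) c 0) = diagonal ![c^2, c^2, 1] := by
    rw [Umat_rhoE0]
    norm_num
  obtain ⟨hmem, hsum⟩ := evalsR_diag (c^2) 1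
  rw [Fin.sum_univ_three] at hsum
  have e0 := hmem 0
  have e1 := hmem 1
  have e2 := hmem 2
  apply le_antisymm
  · exact mval_le hU (by linarith) (by linarith)
  · rw [mval]
    have hmm : ∀ (i j : Fin 3), (i, j) ∈ Finset.univ.filter (fun p : Fin 3 × Fin 3 => p.1 < p.2) →
        1 + c^2 ≤ evalsR (Umat (rhoE0 (1/2) (1/2) c 0)) i + evalsR (Umat (rhoE0 (1/2) (1/2) c 0)) j →
        1 + c^2 ≤ (Finset.univ.filter (fun p : Fin 3 × Fin 3 => p.1 < p.2)).sup'
          (by decide) (fun p => evalsR (Umat (rhoE0 (1/2) (1/2) c 0)) p.1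
            + evalsR (Umat (rhoE0 (1/2) (1/2) c 0)) p.2) := by
      intro i j hmem hle
      refine le_trans hle ?_
      exact Finset.le_sup' (fun p => evalsR (Umat (rhoE0 (1/2) (1/2) c 0)) p.1
        + evalsR (Umat (rhoE0 (1/2) (1/2) c 0)) p.2) hmem
    rw [hU] at *
    rcases e2 with h2 | h2
    · exact hmm 0 1 (Finset.mem_filter.mpr ⟨Finset.mem_univ _, by decide⟩)
        (by rcases e0 with h0 | h0 <;> rcases e1 with h1 | h1 <;> nlinarith)
    · rcases e1 with h1 | h1
      · exact hmm 1 2 (Finset.mem_filter.mpr ⟨Finset.mem_univ _, by decide⟩) (by nlinarith)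
      · rcases e0 with h0 | h0
        · exact hmm 0 2 (Finset.mem_filter.mpr ⟨Finset.mem_univ _, by decide⟩) (by nlinarith)
        · exact hmm 0 1 (Finset.mem_filter.mpr ⟨Finset.mem_univ _, by decide⟩) (by nlinarith)

lemma trace_sq_rhoE0 (a b c θ : ℝ) :
    ((rhoE0 a b c θ * rhoE0 a b c θ).trace).re = a^2 + b^2 + (1-a-b)^2 + c^2/2 := by
  have he' : Complex.exp (-(↑θ * Complex.I)) = Complex.cos θ - Complex.sin θ * Complex.I := by
    rw [show -(↑θ * Complex.I) = (-↑θ) * Complex.I by ring, Complex.exp_mul_I]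
    push_cast
    rw [Complex.cos_neg, Complex.sin_neg]
    ring
  simp [rhoE0, Matrix.trace, Matrix.mul_apply, Fin.sum_univ_four, Matrix.vecHead,
    Matrix.vecTail, Complex.exp_mul_I, he', ← Complex.ofReal_cos, ← Complex.ofReal_sin]
  linear_combination (c^2/2) * Real.sin_sq_add_cos_sq θ

/-- for every s ∈ [0,2/3] and c = √(1 − (3/2)s) there is a state
(namely ρ_MVB with β = 1 + c²) with S_L = s, C = c and m = 1 + c² = 2 − (3/2)s,
and no class-E₀ state with linear entropy s has a larger m. -/
theorem exists_max_CHSH_state (s : ℝ) (hs0 : 0 ≤ s) (hs1 : s ≤ 2/3) :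
    ∀ c : ℝ, c = Real.sqrt (1 - (3/2) * s) →
    (IsDensity (rhoMVB (1 + c ^ 2) 0) ∧
      linEntropy (rhoMVB (1 + c ^ 2) 0) = s ∧
      concurrence (rhoMVB (1 + c ^ 2) 0) = c ∧
      mval (rhoMVB (1 + c ^ 2) 0) = 1 + c ^ 2 ∧
      1 + c ^ 2 = 2 - (3/2) * s) ∧
    (∀ a b c' θ : ℝ, 0 ≤ a → 0 ≤ b → a + b ≤ 1 → 0 ≤ c' → c' ≤ 1 →
      c' ^ 2 / 4 ≤ a * b → linEntropy (rhoE0 a b c' θ) = s →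
      mval (rhoE0 a b c' θ) ≤ 1 + c ^ 2) := by
  intro c hc
  have h32 : 0 ≤ 1 - 3/2 * s := by linarith
  have hc2 : c^2 = 1 - 3/2 * s := by rw [hc]; rw [Real.sq_sqrt h32]
  have hc0 : 0 ≤ c := hc ▸ Real.sqrt_nonneg _
  have hc1 : c ≤ 1 := by nlinarith
  have hmvb : rhoMVB (1 + c^2) 0 = rhoE0 (1/2) (1/2) c 0 := by
    rw [rhoMVB, show 1 + c^2 - 1 = c^2 by ring, Real.sqrt_sq hc0]
  have hmb : rhoMVB (1 + c^2) 0 = mb (1/2) (c/2) := by rw [hmvb, rhoE0_half]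
  constructor
  · refine ⟨⟨?_, ?_⟩, ?_, ?_, ?_, by linarith⟩
    · rw [hmb]
      exact mb_psd (abs_le.mpr ⟨by linarith, by linarith⟩)
    · rw [hmb, mb_trace]
      norm_num
    · rw [hmvb, linEntropy, trace_sq_rhoE0]
      norm_num
      linarith
    · rw [hmb]
      exact conc_mb hc0 hc1
    · rw [hmvb]
      exact mval_MVB (by nlinarith)
  · intro a b c' θ ha hb hab hc' hc'1 hcab hent
    rw [linEntropy, trace_sq_rhoE0] at hent
    have hB : 1 + c^2 = 2*(a^2 + b^2 + (1-a-b)^2) + c'^2 := by linarith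
    apply mval_le (Umat_rhoE0 a b c' θ)
    · nlinarith [sq_nonneg (a - b)]
    · nlinarith [sq_nonneg (a - b), mul_nonneg (mul_nonneg (by linarith : (0:ℝ) ≤ 1 - a - b) ha) hb,
        mul_nonneg (by linarith : (0:ℝ) ≤ 1 - a - b) (by linarith : (0:ℝ) ≤ a + b)]

end
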